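/- Potential function upper bound: with M^{(t)}, P^{(t)}, Φ^{(t)} = Tr(e^{δΣ_{τ<t}M^{(τ)}}) as in the multiplicative weights setup over r second-order cones (0 ⪯ M^{(t)} ⪯ e, 0 < δ ≤ 1), one has Φ^{(T)} ≤ 2r · exp((e^δ − 1) Σ_{τ<T} Tr(P^{(τ)} ∘ M^{(τ)})). -/

import Mathlib

open Real Finset

noncomputable section

namespace SOC

/-- A vector in `ℝ^{1+d}` split into a scalar part and a vector part. -/
abbrev Vec (d : ℕ) := ℝ × EuclideanSpace ℝ (Fin d)

variable {d : ℕ}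

/-- Membership in the second-order (Lorentz) cone: `‖v⃗‖ ≤ v₀`. -/
def inCone (v : Vec d) : Prop := ‖v.2‖ ≤ v.1

/-- Euclidean inner product on `ℝ^{1+d}`. -/
def dotp (v w : Vec d) : ℝ := v.1 * w.1 + ∑ i, v.2 i * w.2 i

/-- Euclidean norm on `ℝ^{1+d}`. -/
def enorm (v : Vec d) : ℝ := Real.sqrt (v.1 ^ 2 + ‖v.2‖ ^ 2)

/-- The soc norm `|v₀| + ‖v⃗‖`. -/
def socNorm (v : Vec d) : ℝ := |v.1| + ‖v.2‖

/-- Jordan-algebra trace `Tr(v) = 2 v₀`. -/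
def jtr (v : Vec d) : ℝ := 2 * v.1

/-- Jordan (circle) product. -/
def jmul (v w : Vec d) : Vec d := (dotp v w, v.1 • w.2 + w.1 • v.2)

/-- The eigenvalue `λ₊ = v₀ + ‖v⃗‖`. -/
def lamP (v : Vec d) : ℝ := v.1 + ‖v.2‖

/-- The eigenvalue `λ₋ = v₀ - ‖v⃗‖`. -/
def lamM (v : Vec d) : ℝ := v.1 - ‖v.2‖

/-- Jordan frame eigenvector `c₊ = (1/2)(1, v⃗/‖v⃗‖)`. -/
def cP (v : Vec d) : Vec d := (1 / 2, (1 / (2 * ‖v.2‖)) • v.2)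

/-- Jordan frame eigenvector `c₋ = (1/2)(1, -v⃗/‖v⃗‖)`. -/
def cM (v : Vec d) : Vec d := (1 / 2, (-(1 / (2 * ‖v.2‖))) • v.2)

/-- Jordan-algebra exponential `e^v = e^{λ₊} c₊ + e^{λ₋} c₋`. -/
def jexp (v : Vec d) : Vec d :=
  ((Real.exp (lamP v) + Real.exp (lamM v)) / 2,
   ((Real.exp (lamP v) - Real.exp (lamM v)) / (2 * ‖v.2‖)) • v.2)

/-- Jordan-algebra square root `√v = √λ₊ c₊ + √λ₋ c₋`. -/
def jsqrt (v : Vec d) : Vec d :=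
  ((Real.sqrt (lamP v) + Real.sqrt (lamM v)) / 2,
   ((Real.sqrt (lamP v) - Real.sqrt (lamM v)) / (2 * ‖v.2‖)) • v.2)

/-- The cone partial order `u ⪯ v`. -/
def cleq (u v : Vec d) : Prop := inCone (v - u)

/-- The identity element `e = (1, 0⃗)`. -/
def idel (d : ℕ) : Vec d := (1, 0)

/-- Arrowhead matrix of `v`. -/
def arw (v : Vec d) : Matrix (Unit ⊕ Fin d) (Unit ⊕ Fin d) ℝ :=
  Matrix.fromBlocks (Matrix.of fun _ _ => v.1) (Matrix.of fun _ i => v.2 i)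
    (Matrix.of fun i _ => v.2 i) (v.1 • 1)

/-- View a pair as a plain vector indexed by `Unit ⊕ Fin d`. -/
def toVec (v : Vec d) : (Unit ⊕ Fin d) → ℝ := Sum.elim (fun _ => v.1) (fun i => v.2 i)

/-- A multicone vector: one Lorentz-cone vector per cone `k`. -/
abbrev MVec {r : ℕ} (n : Fin r → ℕ) := ∀ k, Vec (n k)

variable {r : ℕ} {n : Fin r → ℕ}

/-- Multicone trace. -/
def mtr (v : MVec n) : ℝ := ∑ k, jtr (v k)

/-- Multicone Jordan exponential (cone-wise). -/
def mjexp (v : MVec n) : MVec n := fun k => jexp (v k)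

/-- Multicone Jordan product (cone-wise). -/
def mjmul (v w : MVec n) : MVec n := fun k => jmul (v k) (w k)

/-- Multicone cone membership. -/
def minCone (v : MVec n) : Prop := ∀ k, inCone (v k)

/-- Multicone identity element. -/
def mid (n : Fin r → ℕ) : MVec n := fun k => idel (n k)

end SOC

/-!
Each step multiplies the potential by at most `exp ((e^δ - 1) Tr(P ∘ M))`: with `S = Σ_{τ<t} M^{(τ)}`,
Golden–Thompson gives `Φ^{(t+1)} ≤ Tr(e^{δ S} ∘ e^{δ M})`, and the eigenvalue-wise convexity bound `e^{δ m} ⪯ e + (e^δ - 1) m`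
together with self-duality of the cone gives `Φ^{(t+1)} ≤ Φ^{(t)} (1 + (e^δ - 1) Tr(P ∘ M))`, and
`1 + x ≤ e^x`. In a single Lorentz cone Golden–Thompson reduces to
`cosh ‖x + y‖ ≤ cosh ‖x‖ cosh ‖y‖ + sinh ‖x‖ sinh ‖y‖ cos θ`, which is convexity of `s ↦ cosh √s`
(a power series in `s` with nonnegative coefficients).
-/

lemma le_mul_exp_sum_of_le_mul_exp {u x : ℕ → ℝ} {T : ℕ}
    (h : ∀ t < T, u (t + 1) ≤ u t * exp (x t)) : u T ≤ u 0 * exp (∑ t ∈ range T, x t) := by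
  induction T with
  | zero => simp
  | succ T ih =>
    calc u (T + 1) ≤ u T * exp (x T) := h T (lt_add_one T)
      _ ≤ u 0 * exp (∑ t ∈ range T, x t) * exp (x T) := by
        gcongr
        exact ih fun t ht => h t (ht.trans (lt_add_one T))
      _ = u 0 * exp (∑ t ∈ range (T + 1), x t) := by rw [sum_range_succ, exp_add, mul_assoc]

namespace SOC

open scoped RealInnerProductSpace

variable {d : ℕ}

lemma inCone_add {u v : Vec d} (hu : inCone u) (hv : inCone v) : inCone (u + v) :=
  (norm_add_le u.2 v.2).trans (add_le_add hu hv)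

lemma inCone_smul {c : ℝ} (hc : 0 ≤ c) {v : Vec d} (hv : inCone v) : inCone (c • v) := by
  simpa only [inCone, Prod.smul_fst, Prod.smul_snd, norm_smul, Real.norm_of_nonneg hc,
    smul_eq_mul] using mul_le_mul_of_nonneg_left hv hc

lemma inCone_cP (v : Vec d) : inCone (cP v) := by
  rcases eq_or_ne v.2 0 with h | h
  · simp [inCone, cP, h]
  · have ht : 0 < ‖v.2‖ := norm_pos_iff.mpr h
    simp only [inCone, cP, norm_smul, Real.norm_of_nonneg (by positivity : 0 ≤ 1 / (2 * ‖v.2‖))]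
    field_simp
    rfl

lemma inCone_cM (v : Vec d) : inCone (cM v) := by
  simpa [inCone, cM, cP, norm_smul] using inCone_cP v

lemma inCone_smul_cP_add_smul_cM {a b : ℝ} (ha : 0 ≤ a) (hb : 0 ≤ b) (v : Vec d) :
    inCone (a • cP v + b • cM v) :=
  inCone_add (inCone_smul ha (inCone_cP v)) (inCone_smul hb (inCone_cM v))

lemma idel_eq_cP_add_cM (v : Vec d) : idel d = cP v + cM v := by
  refine Prod.ext ?_ ?_ <;>
    simp only [idel, cP, one_div, mul_inv_rev, cM, neg_smul, Prod.mk_add_mk, add_neg_cancel]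
  norm_num

lemma eq_lamP_smul_cP_add_lamM_smul_cM (v : Vec d) :
    v = lamP v • cP v + lamM v • cM v := by
  rcases eq_or_ne v.2 0 with h | h
  · refine Prod.ext ?_ ?_ <;>
      simp only [lamP, lamM, cP, cM, h, norm_zero, add_zero, sub_zero, one_div, mul_zero, div_zero,
        smul_zero, neg_zero, Prod.smul_mk, smul_eq_mul, Prod.mk_add_mk]
    ring
  · refine Prod.ext ?_ ?_
    · simp only [lamP, lamM, cP, cM, Prod.smul_mk, smul_eq_mul, Prod.mk_add_mk]
      ring
    · have hcoef : lamP v * (1 / (2 * ‖v.2‖)) + lamM v * -(1 / (2 * ‖v.2‖)) = 1 := by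
        simp only [lamP, lamM]
        field_simp
        ring
      simp only [Prod.snd_add, Prod.smul_snd, cP, cM, smul_smul, ← add_smul, hcoef, one_smul]

lemma jexp_eq (v : Vec d) : jexp v = exp (lamP v) • cP v + exp (lamM v) • cM v := by
  refine Prod.ext ?_ ?_
  · simp only [jexp, cP, cM, Prod.smul_mk, smul_eq_mul, Prod.mk_add_mk]
    ring
  · simp only [jexp, cP, cM, Prod.snd_add, Prod.smul_snd, smul_smul, ← add_smul]
    congr 1
    ring

lemma lamP_smul_of_nonneg {c : ℝ} (hc : 0 ≤ c) (v : Vec d) : lamP (c • v) = c * lamP v := by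
  simp only [lamP, Prod.smul_fst, Prod.smul_snd, smul_eq_mul, norm_smul, Real.norm_of_nonneg hc]
  ring

lemma lamM_smul_of_nonneg {c : ℝ} (hc : 0 ≤ c) (v : Vec d) : lamM (c • v) = c * lamM v := by
  simp only [lamM, Prod.smul_fst, Prod.smul_snd, smul_eq_mul, norm_smul, Real.norm_of_nonneg hc]
  ring

lemma lamP_smul_of_nonpos {c : ℝ} (hc : c ≤ 0) (v : Vec d) : lamP (c • v) = c * lamM v := by
  simp only [lamP, lamM, Prod.smul_fst, Prod.smul_snd, smul_eq_mul, norm_smul,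
    Real.norm_of_nonpos hc]
  ring

lemma lamM_smul_of_nonpos {c : ℝ} (hc : c ≤ 0) (v : Vec d) : lamM (c • v) = c * lamP v := by
  simp only [lamP, lamM, Prod.smul_fst, Prod.smul_snd, smul_eq_mul, norm_smul,
    Real.norm_of_nonpos hc]
  ring

lemma cP_smul_of_pos {c : ℝ} (hc : 0 < c) (v : Vec d) : cP (c • v) = cP v := by
  refine Prod.ext rfl ?_
  simp only [cP, Prod.smul_snd, smul_smul, norm_smul, Real.norm_of_nonneg hc.le]
  congr 1
  field_simp

lemma cM_smul_of_pos {c : ℝ} (hc : 0 < c) (v : Vec d) : cM (c • v) = cM v := by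
  refine Prod.ext rfl ?_
  simp only [cM, Prod.smul_snd, smul_smul, norm_smul, Real.norm_of_nonneg hc.le]
  congr 1
  field_simp

lemma cP_smul_of_neg {c : ℝ} (hc : c < 0) (v : Vec d) : cP (c • v) = cM v := by
  refine Prod.ext rfl ?_
  simp only [cP, cM, Prod.smul_snd, smul_smul, norm_smul, Real.norm_of_nonpos hc.le]
  congr 1
  field_simp
  rw [div_mul_cancel_left₀ hc.ne, one_div]

lemma cM_smul_of_neg {c : ℝ} (hc : c < 0) (v : Vec d) : cM (c • v) = cP v := by
  refine Prod.ext rfl ?_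
  simp only [cP, cM, Prod.smul_snd, smul_smul, norm_smul, Real.norm_of_nonpos hc.le]
  congr 1
  field_simp
  rw [div_mul_cancel_left₀ hc.ne, one_div]

lemma jexp_smul (c : ℝ) (v : Vec d) :
    jexp (c • v) = exp (c * lamP v) • cP v + exp (c * lamM v) • cM v := by
  rw [jexp_eq]
  rcases lt_trichotomy c 0 with hc | rfl | hc
  · rw [lamP_smul_of_nonpos hc.le, lamM_smul_of_nonpos hc.le, cP_smul_of_neg hc,
      cM_smul_of_neg hc, add_comm]
  · simp [lamP, lamM, cP, cM]
  · rw [lamP_smul_of_nonneg hc.le, lamM_smul_of_nonneg hc.le, cP_smul_of_pos hc,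
      cM_smul_of_pos hc]

lemma jexp_inCone (v : Vec d) : inCone (jexp v) := by
  rw [jexp_eq]
  exact inCone_smul_cP_add_smul_cM (exp_pos _).le (exp_pos _).le v

lemma exp_mul_le_one_add_mul {δ x : ℝ} (hx0 : 0 ≤ x) (hx1 : x ≤ 1) :
    exp (δ * x) ≤ 1 + (exp δ - 1) * x := by
  have h := convexOn_exp.2 (Set.mem_univ δ) (Set.mem_univ 0) hx0 (sub_nonneg.2 hx1)
    (add_sub_cancel x 1)
  simp only [smul_eq_mul, mul_zero, add_zero, exp_zero, mul_comm x δ] at h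
  linarith

/-- Both eigenvalues of `m` lie in `[0, 1]`, so the difference of the two sides is a nonnegative
combination of `c₊` and `c₋`. -/
lemma cleq_jexp_smul {m : Vec d} (hm0 : inCone m) (hme : inCone (idel d - m)) (δ : ℝ) :
    cleq (jexp (δ • m)) (idel d + (exp δ - 1) • m) := by
  have hme' : ‖m.2‖ ≤ 1 - m.1 := by simpa [inCone, idel] using hme
  have hm0' : ‖m.2‖ ≤ m.1 := hm0
  have hP := exp_mul_le_one_add_mul (δ := δ) (x := lamP m)
    (by unfold lamP; linarith [norm_nonneg m.2]) (by unfold lamP; linarith)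
  have hM := exp_mul_le_one_add_mul (δ := δ) (x := lamM m)
    (by unfold lamM; linarith) (by unfold lamM; linarith [norm_nonneg m.2])
  have hdiff : idel d + (exp δ - 1) • m - jexp (δ • m) =
      (1 + (exp δ - 1) * lamP m - exp (δ * lamP m)) • cP m +
        (1 + (exp δ - 1) * lamM m - exp (δ * lamM m)) • cM m := by
    rw [jexp_smul]
    linear_combination (norm := module) idel_eq_cP_add_cM m +
      (exp δ - 1) • eq_lamP_smul_cP_add_lamM_smul_cM m
  rw [cleq, hdiff]
  exact inCone_smul_cP_add_smul_cM (by linarith) (by linarith) m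

lemma convexOn_cosh_sqrt : ConvexOn ℝ (Set.Ici 0) fun s => cosh √s := by
  refine ⟨convex_Ici 0, fun A hA B hB l m hl hm hlm => ?_⟩
  have hseries {s : ℝ} (hs : 0 ≤ s) :
      HasSum (fun k => s ^ k / ((2 * k).factorial : ℝ)) (cosh √s) := by
    convert Real.hasSum_cosh √s using 2 with k
    rw [pow_mul, Real.sq_sqrt hs]
  have hAB : 0 ≤ l • A + m • B := (convex_Ici 0) hA hB hl hm hlm
  refine hasSum_le (fun k => ?_) (hseries hAB)
    (((hseries hA).mul_left l).add ((hseries hB).mul_left m))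
  have hpow := (convexOn_pow k).2 hA hB hl hm hlm
  simp only [smul_eq_mul] at hpow ⊢
  rw [← mul_div_assoc, ← mul_div_assoc, ← add_div]
  gcongr

/-- Convexity of `s ↦ cosh √s`, applied at the endpoints `(x ± y)²` of the segment
traced out as `c` runs over `[-1, 1]`. -/
lemma cosh_sqrt_le {x y c : ℝ} (hx : 0 ≤ x) (hy : 0 ≤ y) (hc : |c| ≤ 1) :
    cosh √(x ^ 2 + y ^ 2 + 2 * (x * y * c)) ≤ cosh x * cosh y + sinh x * sinh y * c := by
  obtain ⟨hc1, hc2⟩ := abs_le.mp hc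
  have key := convexOn_cosh_sqrt.2 (sq_nonneg (x + y)) (sq_nonneg (x - y))
    (by linarith : 0 ≤ (1 + c) / 2) (by linarith : 0 ≤ (1 - c) / 2) (by ring)
  simp only [smul_eq_mul, Real.sqrt_sq (add_nonneg hx hy), Real.sqrt_sq_eq_abs,
    Real.cosh_abs] at key
  calc cosh √(x ^ 2 + y ^ 2 + 2 * (x * y * c))
      = cosh √((1 + c) / 2 * (x + y) ^ 2 + (1 - c) / 2 * (x - y) ^ 2) := by ring_nf
    _ ≤ (1 + c) / 2 * cosh (x + y) + (1 - c) / 2 * cosh (x - y) := key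
    _ = cosh x * cosh y + sinh x * sinh y * c := by rw [Real.cosh_add, Real.cosh_sub]; ring

lemma cosh_norm_add_le {E : Type*} [NormedAddCommGroup E] [InnerProductSpace ℝ E] (x y : E) :
    cosh ‖x + y‖ ≤ cosh ‖x‖ * cosh ‖y‖ + sinh ‖x‖ * sinh ‖y‖ * (⟪x, y⟫ / (‖x‖ * ‖y‖)) := by
  set c := ⟪x, y⟫ / (‖x‖ * ‖y‖)
  have hc : |c| ≤ 1 := by
    rw [abs_div, abs_mul, abs_norm, abs_norm]
    exact div_le_one_of_le₀ (abs_real_inner_le_norm x y) (by positivity)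
  have hinner : ⟪x, y⟫ = ‖x‖ * ‖y‖ * c := by
    rcases eq_or_ne x 0 with rfl | hx
    · simp
    rcases eq_or_ne y 0 with rfl | hy
    · simp
    have hxy : ‖x‖ * ‖y‖ ≠ 0 := mul_ne_zero (norm_ne_zero_iff.mpr hx) (norm_ne_zero_iff.mpr hy)
    exact (mul_div_cancel₀ _ hxy).symm
  have hnorm : ‖x + y‖ = √(‖x‖ ^ 2 + ‖y‖ ^ 2 + 2 * (‖x‖ * ‖y‖ * c)) := by
    rw [← hinner, ← Real.sqrt_sq (norm_nonneg (x + y)), norm_add_sq_real]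
    ring_nf
  rw [hnorm]
  exact cosh_sqrt_le (norm_nonneg x) (norm_nonneg y) hc

lemma dotp_eq_inner (v w : Vec d) : dotp v w = v.1 * w.1 + ⟪v.2, w.2⟫ := by
  simp [dotp, PiLp.inner_apply, mul_comm]

lemma jexp_fst (v : Vec d) : (jexp v).1 = exp v.1 * cosh ‖v.2‖ := by
  simp only [jexp, lamP, lamM, Real.cosh_eq, Real.exp_add, Real.exp_sub, Real.exp_neg]
  ring

lemma jexp_snd (v : Vec d) : (jexp v).2 = (exp v.1 * sinh ‖v.2‖ / ‖v.2‖) • v.2 := by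
  simp only [jexp, lamP, lamM, Real.sinh_eq, Real.exp_add, Real.exp_sub, Real.exp_neg]
  congr 1
  ring

lemma jtr_jexp_add_le (a b : Vec d) : jtr (jexp (a + b)) ≤ jtr (jmul (jexp a) (jexp b)) := by
  simp only [jtr, jmul, dotp_eq_inner, jexp_fst, jexp_snd, inner_smul_left, inner_smul_right,
    Prod.fst_add, Prod.snd_add, Real.exp_add, conj_trivial]
  calc 2 * (exp a.1 * exp b.1 * cosh ‖a.2 + b.2‖)
      ≤ 2 * (exp a.1 * exp b.1) * (cosh ‖a.2‖ * cosh ‖b.2‖ +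
          sinh ‖a.2‖ * sinh ‖b.2‖ * (⟪a.2, b.2⟫ / (‖a.2‖ * ‖b.2‖))) := by
        rw [← mul_assoc]
        gcongr
        exact cosh_norm_add_le a.2 b.2
    _ = _ := by ring

lemma dotp_add_right (p u w : Vec d) : dotp p (u + w) = dotp p u + dotp p w := by
  simp only [dotp_eq_inner, Prod.fst_add, Prod.snd_add, inner_add_right]
  ring

lemma dotp_sub_right (p u w : Vec d) : dotp p (u - w) = dotp p u - dotp p w := by
  simp only [dotp_eq_inner, Prod.fst_sub, Prod.snd_sub, inner_sub_right]
  ring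

lemma dotp_smul_left (c : ℝ) (p u : Vec d) : dotp (c • p) u = c * dotp p u := by
  simp only [dotp_eq_inner, Prod.smul_fst, Prod.smul_snd, smul_eq_mul, real_inner_smul_left]
  ring

lemma dotp_smul_right (c : ℝ) (p u : Vec d) : dotp p (c • u) = c * dotp p u := by
  simp only [dotp_eq_inner, Prod.smul_fst, Prod.smul_snd, smul_eq_mul, real_inner_smul_right]
  ring

lemma dotp_idel (p : Vec d) : dotp p (idel d) = p.1 := by
  simp [dotp_eq_inner, idel]

lemma dotp_nonneg_of_inCone {p q : Vec d} (hp : inCone p) (hq : inCone q) : 0 ≤ dotp p q := by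
  have hpq := neg_le_of_abs_le (abs_real_inner_le_norm p.2 q.2)
  rw [inCone] at hp hq
  rw [dotp_eq_inner]
  nlinarith [mul_le_mul hp hq (norm_nonneg q.2) ((norm_nonneg p.2).trans hp)]

lemma dotp_le_dotp_of_cleq {p u w : Vec d} (hp : inCone p) (h : cleq u w) :
    dotp p u ≤ dotp p w := by
  have := dotp_nonneg_of_inCone hp h
  rw [dotp_sub_right] at this
  linarith

lemma jtr_jexp_add_smul_le {m : Vec d} (hm0 : inCone m) (hme : inCone (idel d - m))
    (δ : ℝ) (s : Vec d) :
    jtr (jexp (s + δ • m)) ≤ jtr (jexp s) + (exp δ - 1) * jtr (jmul (jexp s) m) := by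
  have hGT := jtr_jexp_add_le s (δ • m)
  have hlin := dotp_le_dotp_of_cleq (jexp_inCone s) (cleq_jexp_smul hm0 hme δ)
  rw [dotp_add_right, dotp_smul_right, dotp_idel] at hlin
  simp only [jtr, jmul] at hGT ⊢
  linarith

variable {r : ℕ} {n : Fin r → ℕ}

lemma mtr_mjexp_zero : mtr (mjexp (0 : MVec n)) = 2 * r := by
  simp [mtr, mjexp, jtr, jexp_fst, mul_comm]

lemma mtr_mjexp_pos (hr : 0 < r) (v : MVec n) : 0 < mtr (mjexp v) := by
  have : Nonempty (Fin r) := ⟨⟨0, hr⟩⟩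
  refine sum_pos (fun k _ => ?_) univ_nonempty
  simp only [mjexp, jtr, jexp_fst]
  positivity

lemma mtr_mjmul_smul_left (c : ℝ) (v w : MVec n) : mtr (mjmul (c • v) w) = c * mtr (mjmul v w) := by
  simp only [mtr, mul_sum]
  refine sum_congr rfl fun k _ => ?_
  simp only [mjmul, jtr, jmul, Pi.smul_apply, dotp_smul_left]
  ring

lemma mtr_mjexp_add_smul_le {m : MVec n} (hm0 : minCone m) (hme : minCone (mid n - m))
    (δ : ℝ) (s : MVec n) :
    mtr (mjexp (s + δ • m)) ≤ mtr (mjexp s) + (exp δ - 1) * mtr (mjmul (mjexp s) m) := by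
  simp only [mtr, mul_sum, ← sum_add_distrib]
  exact sum_le_sum fun k _ => jtr_jexp_add_smul_le (hm0 k) (hme k) δ (s k)

lemma mtr_mjexp_add_smul_le_mul_exp (hr : 0 < r) {m : MVec n} (hm0 : minCone m)
    (hme : minCone (mid n - m)) (δ : ℝ) (s : MVec n) :
    mtr (mjexp (s + δ • m)) ≤
      mtr (mjexp s) * exp ((exp δ - 1) * mtr (mjmul ((mtr (mjexp s))⁻¹ • mjexp s) m)) := by
  have hΦ := mtr_mjexp_pos hr s
  rw [mtr_mjmul_smul_left]
  calc mtr (mjexp (s + δ • m))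
      ≤ mtr (mjexp s) + (exp δ - 1) * mtr (mjmul (mjexp s) m) := mtr_mjexp_add_smul_le hm0 hme δ s
    _ = mtr (mjexp s) * ((exp δ - 1) * ((mtr (mjexp s))⁻¹ * mtr (mjmul (mjexp s) m)) + 1) := by
      field_simp
      ring
    _ ≤ _ := by gcongr; exact add_one_le_exp _

end SOC

theorem potential_upper_bound_general {r : ℕ} (hr : 0 < r) {n : Fin r → ℕ} (T : ℕ) (δ : ℝ)
    (M : ℕ → SOC.MVec n)
    (hM0 : ∀ t < T, SOC.minCone (M t))
    (hMe : ∀ t < T, SOC.minCone (SOC.mid n - M t))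
    (P : ℕ → SOC.MVec n)
    (hP : ∀ t, P t = (SOC.mtr (SOC.mjexp (δ • ∑ τ ∈ Finset.range t, M τ)))⁻¹ •
      SOC.mjexp (δ • ∑ τ ∈ Finset.range t, M τ)) :
    SOC.mtr (SOC.mjexp (δ • ∑ τ ∈ Finset.range T, M τ)) ≤
      2 * r * Real.exp ((Real.exp δ - 1) *
        ∑ τ ∈ Finset.range T, SOC.mtr (SOC.mjmul (P τ) (M τ))) := by
  have hstep : ∀ t < T, SOC.mtr (SOC.mjexp (δ • ∑ τ ∈ range (t + 1), M τ)) ≤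
      SOC.mtr (SOC.mjexp (δ • ∑ τ ∈ range t, M τ)) *
        exp ((exp δ - 1) * SOC.mtr (SOC.mjmul (P t) (M t))) := fun t ht => by
    rw [sum_range_succ, smul_add, hP t]
    exact SOC.mtr_mjexp_add_smul_le_mul_exp hr (hM0 t ht) (hMe t ht) δ _
  have h := le_mul_exp_sum_of_le_mul_exp
    (u := fun t => SOC.mtr (SOC.mjexp (δ • ∑ τ ∈ range t, M τ))) hstep
  rwa [sum_range_zero, smul_zero, SOC.mtr_mjexp_zero, ← mul_sum] at h

/-- Potential function upper bound:
`Φ^{(T)} ≤ 2r · exp((e^δ − 1) Σ_{τ<T} Tr(P^{(τ)} ∘ M^{(τ)}))`. -/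
theorem potential_upper_bound {r : ℕ} (hr : 0 < r) {n : Fin r → ℕ} (T : ℕ) (δ : ℝ)
    (hδ0 : 0 < δ) (hδ1 : δ ≤ 1) (M : ℕ → SOC.MVec n)
    (hM0 : ∀ t < T, SOC.minCone (M t))
    (hMe : ∀ t < T, SOC.minCone (SOC.mid n - M t))
    (P : ℕ → SOC.MVec n)
    (hP : ∀ t, P t = (SOC.mtr (SOC.mjexp (δ • ∑ τ ∈ Finset.range t, M τ)))⁻¹ •
      SOC.mjexp (δ • ∑ τ ∈ Finset.range t, M τ)) :
    SOC.mtr (SOC.mjexp (δ • ∑ τ ∈ Finset.range T, M τ)) ≤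
      2 * r * Real.exp ((Real.exp δ - 1) *
        ∑ τ ∈ Finset.range T, SOC.mtr (SOC.mjmul (P τ) (M τ))) :=
  potential_upper_bound_general hr T δ M hM0 hMe P hP
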